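/- Suppose V = Θ̃ Π Θ̃(I,I)^{-1} V(I,:) with V'V = I_K, where Π is a rank-K membership matrix with pure-node index tuple I (Π(I,:) = I_K), Θ̃ is diagonal with diagonal entries in [θ̃_min, θ̃_max], θ̃_min > 0, every row of V is nonzero, and V(I,:) is invertible. Let κ(Π'Π) = λ₁(Π'Π)/λ_K(Π'Π) be the condition number of Π'Π. Then the largest eigenvalue of V_{*,1}(I,:) V_{*,1}(I,:)' is at most (θ̃_max²/θ̃_min²) · K · κ(Π'Π), and its smallest eigenvalue is at least (θ̃_min²/θ̃_max²) · κ(Π'Π)^{-1}. -/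

import Mathlib

/-!
Write `B = V(I,:)`, `E = Θ̃(I,I)⁻¹`, `W = Θ̃ Π` and `M = E B`. The model says `V = W M`, so
`V'V = I` gives `M'(W'W)M = I`, i.e. `M M' = (W'W)⁻¹`. The quadratic form of `W'W` lies between
`μ = θ̃_min² λ_K(Π'Π)` and `ν = θ̃_max² λ₁(Π'Π)`, so that of `M M'` lies between `ν⁻¹` and `μ⁻¹`.
Row normalization ignores the positive row scaling `E`, so the corner Gram matrix of `V_{*,1}` is
the correlation matrix of `M M'`; its diagonal obeys the same bounds, which puts the spectrum of
the correlation matrix in `[μ/ν, ν/μ]`.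
-/

open Matrix

/-- The Euclidean norm of a row vector. -/
noncomputable def rnorm {m : ℕ} (v : Fin m → ℝ) : ℝ := Real.sqrt (∑ j, v j ^ 2)

/-- Row-wise ℓ₂-normalization of a matrix. -/
noncomputable def rowNormalize {n m : ℕ} (V : Matrix (Fin n) (Fin m) ℝ) :
    Matrix (Fin n) (Fin m) ℝ :=
  Matrix.of fun i j => V i j / rnorm (V i)

section QuadraticForms

variable {ι : Type*} [Fintype ι]

namespace Matrix.IsHermitian

variable [DecidableEq ι] {A : Matrix ι ι ℝ} (hA : A.IsHermitian)

theorem dotProduct_mulVec_eq_sum_eigenvalues (x : ι → ℝ) :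
    x ⬝ᵥ A *ᵥ x =
      ∑ i, hA.eigenvalues i * (star (hA.eigenvectorUnitary : Matrix ι ι ℝ) *ᵥ x) i ^ 2 := by
  set U : Matrix ι ι ℝ := ↑hA.eigenvectorUnitary
  conv_lhs => rw [hA.spectral_theorem, Unitary.conjStarAlgAut_apply]
  rw [← mulVec_mulVec, ← mulVec_mulVec, dotProduct_mulVec, star_eq_conjTranspose,
    conjTranspose_eq_transpose_of_trivial, ← mulVec_transpose]
  simp only [mulVec_diagonal, dotProduct, Function.comp_apply, RCLike.ofReal_real_eq_id, id]
  exact Finset.sum_congr rfl fun i _ => by ring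

theorem dotProduct_self_eq_sum_sq (x : ι → ℝ) :
    x ⬝ᵥ x = ∑ i, (star (hA.eigenvectorUnitary : Matrix ι ι ℝ) *ᵥ x) i ^ 2 := by
  set U : Matrix ι ι ℝ := ↑hA.eigenvectorUnitary
  have hU : U * star U = 1 := Matrix.mem_unitaryGroup_iff.mp hA.eigenvectorUnitary.2
  calc x ⬝ᵥ x = x ⬝ᵥ (U * star U) *ᵥ x := by rw [hU, one_mulVec]
    _ = (star U *ᵥ x) ⬝ᵥ (star U *ᵥ x) := by
      rw [← mulVec_mulVec, dotProduct_mulVec, star_eq_conjTranspose,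
        conjTranspose_eq_transpose_of_trivial, ← mulVec_transpose]
    _ = _ := by simp only [dotProduct, sq]

theorem iInf_eigenvalues_mul_le (x : ι → ℝ) :
    (⨅ i, hA.eigenvalues i) * (x ⬝ᵥ x) ≤ x ⬝ᵥ A *ᵥ x := by
  rw [hA.dotProduct_self_eq_sum_sq, hA.dotProduct_mulVec_eq_sum_eigenvalues, Finset.mul_sum]
  gcongr with i
  exact ciInf_le (Finite.bddBelow_range _) i

theorem le_iSup_eigenvalues_mul (x : ι → ℝ) :
    x ⬝ᵥ A *ᵥ x ≤ (⨆ i, hA.eigenvalues i) * (x ⬝ᵥ x) := by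
  rw [hA.dotProduct_self_eq_sum_sq, hA.dotProduct_mulVec_eq_sum_eigenvalues, Finset.mul_sum]
  gcongr with i
  exact le_ciSup (Finite.bddAbove_range _) i

theorem eigenvalues_eq_dotProduct_mulVec (i : ι) :
    hA.eigenvalues i = ⇑(hA.eigenvectorBasis i) ⬝ᵥ A *ᵥ ⇑(hA.eigenvectorBasis i) := by
  simpa using hA.eigenvalues_eq i

theorem dotProduct_self_eigenvectorBasis (i : ι) :
    ⇑(hA.eigenvectorBasis i) ⬝ᵥ ⇑(hA.eigenvectorBasis i) = 1 := by
  have h : inner ℝ (hA.eigenvectorBasis i) (hA.eigenvectorBasis i) = 1 := by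
    rw [real_inner_self_eq_norm_sq, hA.eigenvectorBasis.orthonormal.1 i, one_pow]
  rwa [EuclideanSpace.inner_eq_star_dotProduct, star_trivial] at h

theorem le_iInf_eigenvalues [Nonempty ι] {a : ℝ} (h : ∀ x, a * (x ⬝ᵥ x) ≤ x ⬝ᵥ A *ᵥ x) :
    a ≤ ⨅ i, hA.eigenvalues i :=
  le_ciInf fun i => by
    simpa [hA.dotProduct_self_eigenvectorBasis, ← hA.eigenvalues_eq_dotProduct_mulVec] using
      h (hA.eigenvectorBasis i)

theorem iSup_eigenvalues_le [Nonempty ι] {b : ℝ} (h : ∀ x, x ⬝ᵥ A *ᵥ x ≤ b * (x ⬝ᵥ x)) :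
    ⨆ i, hA.eigenvalues i ≤ b :=
  ciSup_le fun i => by
    simpa [hA.dotProduct_self_eigenvectorBasis, ← hA.eigenvalues_eq_dotProduct_mulVec] using
      h (hA.eigenvectorBasis i)

end Matrix.IsHermitian

theorem Matrix.mulVec_injective_of_rank_eq_card {m : Type*} {A : Matrix m ι ℝ}
    (h : A.rank = Fintype.card ι) : Function.Injective A.mulVec := by
  have hker := LinearMap.finrank_range_add_finrank_ker A.mulVecLin
  rw [Module.finrank_fintype_fun_eq_card, ← Matrix.rank, h, Nat.add_eq_left,
    Submodule.finrank_eq_zero] at hker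
  exact LinearMap.ker_eq_bot.mp hker

variable {m : Type*} [Fintype m]

theorem Matrix.IsHermitian.iInf_eigenvalues_pos_of_injective [DecidableEq ι] [Nonempty ι]
    {A : Matrix m ι ℝ} (hA : Function.Injective A.mulVec) (h : (Aᵀ * A).IsHermitian) :
    0 < ⨅ i, h.eigenvalues i := by
  have hpd : (Aᵀ * A).PosDef := by
    simpa [conjTranspose_eq_transpose_of_trivial] using PosDef.conjTranspose_mul_self A hA
  obtain ⟨i, hi⟩ := exists_eq_ciInf_of_finite (f := h.eigenvalues)
  exact hi ▸ hpd.eigenvalues_pos i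

theorem dotProduct_mulVec_transpose_mul_self (A : Matrix m ι ℝ) (x : ι → ℝ) :
    x ⬝ᵥ (Aᵀ * A) *ᵥ x = (A *ᵥ x) ⬝ᵥ (A *ᵥ x) := by
  rw [← mulVec_mulVec, dotProduct_mulVec, vecMul_transpose]

theorem mul_dotProduct_self_le_diagonal_mulVec [DecidableEq m] {θ : m → ℝ} {c : ℝ}
    (hθ : ∀ i, c ≤ θ i ^ 2) (y : m → ℝ) :
    c * (y ⬝ᵥ y) ≤ (diagonal θ *ᵥ y) ⬝ᵥ (diagonal θ *ᵥ y) := by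
  simp only [dotProduct, mulVec_diagonal, Finset.mul_sum]
  refine Finset.sum_le_sum fun i _ => ?_
  nlinarith [hθ i, mul_self_nonneg (y i)]

theorem diagonal_mulVec_dotProduct_self_le [DecidableEq m] {θ : m → ℝ} {c : ℝ}
    (hθ : ∀ i, θ i ^ 2 ≤ c) (y : m → ℝ) :
    (diagonal θ *ᵥ y) ⬝ᵥ (diagonal θ *ᵥ y) ≤ c * (y ⬝ᵥ y) := by
  simp only [dotProduct, mulVec_diagonal, Finset.mul_sum]
  refine Finset.sum_le_sum fun i _ => ?_
  nlinarith [hθ i, mul_self_nonneg (y i)]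

theorem Matrix.IsHermitian.mul_iInf_eigenvalues_mul_le_gram_diagonal_mul [DecidableEq ι]
    [DecidableEq m] {A : Matrix m ι ℝ} (hA : (Aᵀ * A).IsHermitian) {θ : m → ℝ} {c : ℝ}
    (hc : 0 ≤ c) (hθ : ∀ i, c ≤ θ i ^ 2) (x : ι → ℝ) :
    c * (⨅ i, hA.eigenvalues i) * (x ⬝ᵥ x) ≤
      x ⬝ᵥ ((diagonal θ * A)ᵀ * (diagonal θ * A)) *ᵥ x := by
  rw [dotProduct_mulVec_transpose_mul_self, ← mulVec_mulVec, mul_assoc]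
  calc c * ((⨅ i, hA.eigenvalues i) * (x ⬝ᵥ x)) ≤ c * ((A *ᵥ x) ⬝ᵥ (A *ᵥ x)) := by
        rw [← dotProduct_mulVec_transpose_mul_self]
        exact mul_le_mul_of_nonneg_left (hA.iInf_eigenvalues_mul_le x) hc
    _ ≤ _ := mul_dotProduct_self_le_diagonal_mulVec hθ _

theorem Matrix.IsHermitian.gram_diagonal_mul_le_mul_iSup_eigenvalues_mul [DecidableEq ι]
    [DecidableEq m] {A : Matrix m ι ℝ} (hA : (Aᵀ * A).IsHermitian) {θ : m → ℝ} {c : ℝ}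
    (hc : 0 ≤ c) (hθ : ∀ i, θ i ^ 2 ≤ c) (x : ι → ℝ) :
    x ⬝ᵥ ((diagonal θ * A)ᵀ * (diagonal θ * A)) *ᵥ x ≤
      c * (⨆ i, hA.eigenvalues i) * (x ⬝ᵥ x) := by
  rw [dotProduct_mulVec_transpose_mul_self, ← mulVec_mulVec, mul_assoc]
  calc _ ≤ c * ((A *ᵥ x) ⬝ᵥ (A *ᵥ x)) := diagonal_mulVec_dotProduct_self_le hθ _
    _ ≤ c * ((⨆ i, hA.eigenvalues i) * (x ⬝ᵥ x)) := by
        rw [← dotProduct_mulVec_transpose_mul_self]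
        exact mul_le_mul_of_nonneg_left (hA.le_iSup_eigenvalues_mul x) hc

theorem mul_mul_transpose_eq_one_of_transpose_mul_self_eq_one [DecidableEq ι]
    {W : Matrix m ι ℝ} {M : Matrix ι ι ℝ} (h : (W * M)ᵀ * (W * M) = 1) :
    (Wᵀ * W) * (M * Mᵀ) = 1 := by
  rw [transpose_mul, Matrix.mul_assoc, mul_eq_one_comm] at h
  simpa only [Matrix.mul_assoc] using h

/-- Completing the square `‖x - μ Q x‖² ≥ 0`. -/
theorem dotProduct_mulVec_le_inv_mul_of_mul_eq_one [DecidableEq ι] {P Q : Matrix ι ι ℝ}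
    (hPQ : P * Q = 1) {μ : ℝ} (hμ : 0 < μ) (hlow : ∀ x, μ * (x ⬝ᵥ x) ≤ x ⬝ᵥ P *ᵥ x)
    (x : ι → ℝ) : x ⬝ᵥ Q *ᵥ x ≤ μ⁻¹ * (x ⬝ᵥ x) := by
  rw [le_inv_mul_iff₀ hμ]
  set y := Q *ᵥ x
  have hPy : P *ᵥ y = x := by rw [mulVec_mulVec, hPQ, one_mulVec]
  have hsq : 0 ≤ (x - μ • y) ⬝ᵥ (x - μ • y) := Finset.sum_nonneg fun i _ => mul_self_nonneg _
  have hy := hlow y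
  rw [hPy, dotProduct_comm y x] at hy
  simp only [sub_dotProduct, dotProduct_sub, smul_dotProduct, dotProduct_smul, smul_eq_mul,
    dotProduct_comm y x] at hsq
  nlinarith [mul_le_mul_of_nonneg_left hy hμ.le]

/-- Completing the square `‖W (ν Q x - x)‖² ≥ 0`. -/
theorem inv_mul_dotProduct_self_le_of_gram_mul_eq_one [DecidableEq ι] {W : Matrix m ι ℝ}
    {Q : Matrix ι ι ℝ} (hWQ : (Wᵀ * W) * Q = 1) {ν : ℝ} (hν : 0 < ν)
    (hup : ∀ x, x ⬝ᵥ (Wᵀ * W) *ᵥ x ≤ ν * (x ⬝ᵥ x)) (x : ι → ℝ) :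
    ν⁻¹ * (x ⬝ᵥ x) ≤ x ⬝ᵥ Q *ᵥ x := by
  rw [inv_mul_le_iff₀ hν]
  set y := Q *ᵥ x
  have hPy : (Wᵀ * W) *ᵥ y = x := by rw [mulVec_mulVec, hWQ, one_mulVec]
  have hyPx : y ⬝ᵥ (Wᵀ * W) *ᵥ x = x ⬝ᵥ x := by
    rw [dotProduct_mulVec, ← mulVec_transpose, transpose_mul, transpose_transpose, hPy,
      dotProduct_comm]
  have hsq : 0 ≤ (ν • y - x) ⬝ᵥ (Wᵀ * W) *ᵥ (ν • y - x) := by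
    rw [dotProduct_mulVec_transpose_mul_self]
    exact Finset.sum_nonneg fun i _ => mul_self_nonneg _
  simp only [mulVec_sub, mulVec_smul, sub_dotProduct, dotProduct_sub, smul_dotProduct,
    dotProduct_smul, smul_eq_mul, hPy, hyPx, dotProduct_comm y x] at hsq
  nlinarith [hup x]

theorem dotProduct_diagonal_mul_mul_diagonal_mulVec [DecidableEq ι] (s : ι → ℝ)
    (Q : Matrix ι ι ℝ) (x : ι → ℝ) :
    x ⬝ᵥ (diagonal s * Q * diagonal s) *ᵥ x = (s * x) ⬝ᵥ Q *ᵥ (s * x) := by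
  have hl : x ᵥ* diagonal s = s * x := funext fun k => by simp [vecMul_diagonal, mul_comm]
  have hr : diagonal s *ᵥ x = s * x := funext fun k => by simp [mulVec_diagonal]
  rw [← mulVec_mulVec, ← mulVec_mulVec, dotProduct_mulVec, hl, hr]

end QuadraticForms

section RowNormalize

variable {n m : ℕ}

theorem rnorm_sq (v : Fin m → ℝ) : rnorm v ^ 2 = v ⬝ᵥ v := by
  rw [rnorm, Real.sq_sqrt (Finset.sum_nonneg fun j _ => sq_nonneg _)]
  simp only [dotProduct, sq]

theorem rnorm_smul (c : ℝ) (v : Fin m → ℝ) : rnorm (c • v) = |c| * rnorm v := by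
  simp only [rnorm, Pi.smul_apply, smul_eq_mul, mul_pow, ← Finset.mul_sum]
  rw [Real.sqrt_mul (sq_nonneg c), Real.sqrt_sq_eq_abs]

theorem rowNormalize_eq_diagonal_mul (B : Matrix (Fin n) (Fin m) ℝ) :
    rowNormalize B = diagonal (fun k => (rnorm (B k))⁻¹) * B := by
  ext k j
  simp [rowNormalize, diagonal_mul, div_eq_inv_mul]

theorem rowNormalize_diagonal_mul {c : Fin n → ℝ} (hc : ∀ k, 0 < c k)
    (B : Matrix (Fin n) (Fin m) ℝ) : rowNormalize (diagonal c * B) = rowNormalize B := by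
  ext k j
  have hrow : (diagonal c * B) k = c k • B k := by ext; simp [diagonal_mul]
  simp only [rowNormalize, of_apply, hrow, rnorm_smul, abs_of_pos (hc k), diagonal_mul]
  rw [mul_div_mul_left _ _ (hc k).ne']

theorem mul_transpose_self_apply_self (B : Matrix (Fin n) (Fin m) ℝ) (k : Fin n) :
    (B * Bᵀ) k k = rnorm (B k) ^ 2 := by
  rw [rnorm_sq, mul_apply]
  rfl

/-- The diagonal entries of `M Mᵀ`, the squared row norms, obey the same bounds as its quadratic
form, so rescaling them to `1` costs at most one more factor of `b / a`. -/
theorem rowNormalize_mul_transpose_bounds (M : Matrix (Fin n) (Fin m) ℝ) {a b : ℝ}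
    (ha : 0 < a) (hlow : ∀ x, a * (x ⬝ᵥ x) ≤ x ⬝ᵥ (M * Mᵀ) *ᵥ x)
    (hup : ∀ x, x ⬝ᵥ (M * Mᵀ) *ᵥ x ≤ b * (x ⬝ᵥ x)) (x : Fin n → ℝ) :
    a / b * (x ⬝ᵥ x) ≤ x ⬝ᵥ (rowNormalize M * (rowNormalize M)ᵀ) *ᵥ x ∧
      x ⬝ᵥ (rowNormalize M * (rowNormalize M)ᵀ) *ᵥ x ≤ b / a * (x ⬝ᵥ x) := by
  set s : Fin n → ℝ := fun k => (rnorm (M k))⁻¹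
  have hdiag : ∀ k, a ≤ rnorm (M k) ^ 2 ∧ rnorm (M k) ^ 2 ≤ b := fun k => by
    simpa [mul_transpose_self_apply_self] using
      And.intro (hlow (Pi.single k 1)) (hup (Pi.single k 1))
  have hN : rowNormalize M * (rowNormalize M)ᵀ = diagonal s * (M * Mᵀ) * diagonal s := by
    rw [rowNormalize_eq_diagonal_mul, transpose_mul, diagonal_transpose]
    simp only [Matrix.mul_assoc]
    rfl
  have hsx : (s * x) ⬝ᵥ (s * x) = ∑ k, x k * x k / rnorm (M k) ^ 2 := by
    simp only [dotProduct, Pi.mul_apply, s]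
    exact Finset.sum_congr rfl fun k _ => by field_simp
  rw [hN, dotProduct_diagonal_mul_mul_diagonal_mulVec]
  constructor
  · refine le_trans ?_ (hlow _)
    rw [hsx, dotProduct, Finset.mul_sum, Finset.mul_sum]
    refine Finset.sum_le_sum fun k _ => ?_
    rw [mul_div_assoc', div_mul_eq_mul_div, mul_comm a]
    gcongr
    exacts [mul_nonneg (mul_self_nonneg _) ha.le, ha.trans_le (hdiag k).1, (hdiag k).2]
  · refine (hup _).trans ?_
    rw [hsx, dotProduct, Finset.mul_sum, Finset.mul_sum]
    refine Finset.sum_le_sum fun k _ => ?_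
    rw [mul_div_assoc', div_mul_eq_mul_div, mul_comm b]
    have hb : 0 ≤ b := ha.le.trans ((hdiag k).1.trans (hdiag k).2)
    gcongr
    exacts [mul_nonneg (mul_self_nonneg _) hb, (hdiag k).1]

theorem rowNormalize_mul_transpose_bounds_of_gram_mul_eq_one {ι : Type*} [Fintype ι]
    {W : Matrix ι (Fin n) ℝ} {M : Matrix (Fin n) (Fin m) ℝ} (hWM : (Wᵀ * W) * (M * Mᵀ) = 1)
    {μ ν : ℝ} (hμ : 0 < μ) (hν : 0 < ν) (hlow : ∀ x, μ * (x ⬝ᵥ x) ≤ x ⬝ᵥ (Wᵀ * W) *ᵥ x)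
    (hup : ∀ x, x ⬝ᵥ (Wᵀ * W) *ᵥ x ≤ ν * (x ⬝ᵥ x)) (x : Fin n → ℝ) :
    μ / ν * (x ⬝ᵥ x) ≤ x ⬝ᵥ (rowNormalize M * (rowNormalize M)ᵀ) *ᵥ x ∧
      x ⬝ᵥ (rowNormalize M * (rowNormalize M)ᵀ) *ᵥ x ≤ ν / μ * (x ⬝ᵥ x) := by
  simpa only [inv_div_inv] using rowNormalize_mul_transpose_bounds M (inv_pos.2 hν)
    (inv_mul_dotProduct_self_le_of_gram_mul_eq_one hWM hν hup)
    (dotProduct_mulVec_le_inv_mul_of_mul_eq_one hWM hμ hlow) x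

end RowNormalize

theorem corner_gram_eigenvalue_bounds_general {n K : ℕ} (hK : 1 ≤ K)
    (Pim : Matrix (Fin n) (Fin K) ℝ)
    (hrank : Pim.rank = K)
    (I : Fin K → Fin n)
    (θ : Fin n → ℝ) (θmin θmax : ℝ) (hθmin : 0 < θmin)
    (hθ : ∀ i, θmin ≤ θ i ∧ θ i ≤ θmax)
    (V : Matrix (Fin n) (Fin K) ℝ)
    (hVorth : Vᵀ * V = 1)
    (hVdef : V = Matrix.diagonal θ * Pim *
      (Matrix.diagonal (fun k => (θ (I k))⁻¹) * V.submatrix I id))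
    (hH : (Pimᵀ * Pim).IsHermitian)
    (hHc : (((rowNormalize V).submatrix I id) *
      ((rowNormalize V).submatrix I id)ᵀ).IsHermitian) :
    (⨆ k, hHc.eigenvalues k) ≤
      θmax ^ 2 / θmin ^ 2 * K *
        ((⨆ k, hH.eigenvalues k) / (⨅ k, hH.eigenvalues k)) ∧
    θmin ^ 2 / θmax ^ 2 *
        ((⨆ k, hH.eigenvalues k) / (⨅ k, hH.eigenvalues k))⁻¹ ≤
      ⨅ k, hHc.eigenvalues k := by
  have : Nonempty (Fin K) := ⟨⟨0, hK⟩⟩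
  set lmax := ⨆ k, hH.eigenvalues k
  set lmin := ⨅ k, hH.eigenvalues k
  have hlmin : 0 < lmin := hH.iInf_eigenvalues_pos_of_injective
    (mulVec_injective_of_rank_eq_card (by rwa [Fintype.card_fin]))
  have hlmax : 0 < lmax :=
    hlmin.trans_le (ciInf_le_ciSup (Finite.bddBelow_range _) (Finite.bddAbove_range _))
  have hθpos : ∀ i, 0 < θ i := fun i => hθmin.trans_le (hθ i).1
  have hθmax : 0 < θmax := (hθpos (I ⟨0, hK⟩)).trans_le (hθ _).2
  set M := diagonal (fun k => (θ (I k))⁻¹) * V.submatrix I id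
  have hC := rowNormalize_mul_transpose_bounds_of_gram_mul_eq_one
    (mul_mul_transpose_eq_one_of_transpose_mul_self_eq_one (hVdef ▸ hVorth))
    (by positivity) (by positivity)
    (hH.mul_iInf_eigenvalues_mul_le_gram_diagonal_mul (sq_nonneg θmin)
      (fun i => pow_le_pow_left₀ hθmin.le (hθ i).1 2))
    (hH.gram_diagonal_mul_le_mul_iSup_eigenvalues_mul (sq_nonneg θmax)
      (fun i => pow_le_pow_left₀ (hθpos i).le (hθ i).2 2))
  have hN : (rowNormalize V).submatrix I id = rowNormalize M :=
    (rowNormalize_diagonal_mul (fun k => inv_pos.2 (hθpos _)) _).symm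
  constructor
  · refine (hHc.iSup_eigenvalues_le fun x => hN ▸ (hC x).2).trans ?_
    rw [mul_div_mul_comm, mul_right_comm]
    exact le_mul_of_one_le_right (by positivity) (by exact_mod_cast hK)
  · refine le_trans (le_of_eq ?_) (hHc.le_iInf_eigenvalues fun x => hN ▸ (hC x).1)
    rw [inv_div, ← mul_div_mul_comm]

/-- **eigenvalue bounds for the corner Gram matrix.** Under the ideal setup,
with `κ(Π'Π) = λ₁(Π'Π)/λ_K(Π'Π)`, the largest eigenvalue of `V₊(I,:) V₊(I,:)'` is at most
`(θmax²/θmin²)·K·κ(Π'Π)` and its smallest eigenvalue is at least `(θmin²/θmax²)·κ(Π'Π)⁻¹`. -/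
theorem corner_gram_eigenvalue_bounds {n K : ℕ} (hK : 1 ≤ K) (hKn : K ≤ n)
    (Pim : Matrix (Fin n) (Fin K) ℝ)
    (hnonneg : ∀ i k, 0 ≤ Pim i k)
    (hrowsum : ∀ i, ∑ k, Pim i k = 1)
    (hrank : Pim.rank = K)
    (I : Fin K → Fin n)
    (hpure : ∀ k l, Pim (I k) l = if l = k then (1 : ℝ) else 0)
    (θ : Fin n → ℝ) (θmin θmax : ℝ) (hθmin : 0 < θmin)
    (hθ : ∀ i, θmin ≤ θ i ∧ θ i ≤ θmax)
    (V : Matrix (Fin n) (Fin K) ℝ)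
    (hVorth : Vᵀ * V = 1)
    (hVdef : V = Matrix.diagonal θ * Pim *
      (Matrix.diagonal (fun k => (θ (I k))⁻¹) * V.submatrix I id))
    (hrows : ∀ i, V i ≠ 0)
    (hVI : IsUnit (V.submatrix I id))
    (hH : (Pimᵀ * Pim).IsHermitian)
    (hHc : (((rowNormalize V).submatrix I id) *
      ((rowNormalize V).submatrix I id)ᵀ).IsHermitian) :
    (⨆ k, hHc.eigenvalues k) ≤
      θmax ^ 2 / θmin ^ 2 * K *
        ((⨆ k, hH.eigenvalues k) / (⨅ k, hH.eigenvalues k)) ∧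
    θmin ^ 2 / θmax ^ 2 *
        ((⨆ k, hH.eigenvalues k) / (⨅ k, hH.eigenvalues k))⁻¹ ≤
      ⨅ k, hHc.eigenvalues k :=
  corner_gram_eigenvalue_bounds_general hK Pim hrank I θ θmin θmax hθmin hθ V hVorth hVdef hH hHc
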